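/- arXiv:1805.07532 — 4 statements merged into one kernel-verified Lean document; each statement's English description precedes it below -/
import Mathlib

section
/- The limit lim_{x→∞} x^γ v'(x) exists and equals ( γ / ( β + μ(1−γ) + (1/2)σ²γ(1−γ) ) )^γ > 0. -/
/-!
In the logarithmic time `t = log x` put `W = x ^ (γ - 1) v` and `H = x ^ γ v'`. Then
`W' = P := H - (1 - γ) W`, and the HJB equation gives `H' = Q`, an explicit function of `x`, `W`
and `H`. Concavity together with the HJB equation and the lower bound on `v` confine `W` and `H`
to compact subintervals of `(0, ∞)` for large `t`.

Wherever `Q = 0` and `P ≥ 0`, the term `x ^ α` of the production function forces `Q' > 0`. Hence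
the quadrant `{P ≥ 0, Q ≥ 0}` is forward invariant, and outside of it `P` can only cross `0`
downwards; so `P` has eventually constant sign and the bounded function `W` converges. As `P'` is
bounded, Barbalat's lemma gives `P → 0`, hence `H → η := (1 - γ) lim W > 0`. Then `Q = H'`
converges too, necessarily to `0`, and this stationarity equation reads
`(β + μ (1 - γ) + σ² γ (1 - γ) / 2) η = γ η ^ ((γ - 1) / γ)`.
-/

open Set Filter Topology Real

theorem abs_sub_sub_mul_le_of_abs_deriv_sub_le {f f' : ℝ → ℝ} {a h c ε : ℝ} (hh : 0 ≤ h)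
    (hf : ∀ s ∈ Icc a (a + h), HasDerivAt f (f' s) s)
    (hε : ∀ s ∈ Icc a (a + h), |f' s - c| ≤ ε) :
    |f (a + h) - f a - c * h| ≤ ε * h := by
  have key := norm_image_sub_le_of_norm_deriv_le_segment' (f := fun s => f s - c * s)
    (fun s hs => ((hf s hs).sub ((hasDerivAt_id s).const_mul c)).hasDerivWithinAt)
    (fun s hs => by simpa using hε s (Ico_subset_Icc_self hs)) (a + h) ⟨by linarith, le_rfl⟩
  simp only [Real.norm_eq_abs, add_sub_cancel_left] at key
  convert key using 2
  ring

theorem eq_zero_of_tendsto_of_tendsto_deriv {f f' : ℝ → ℝ} {L M : ℝ}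
    (hf : ∀ᶠ t in atTop, HasDerivAt f (f' t) t) (hfL : Tendsto f atTop (𝓝 L))
    (hf'M : Tendsto f' atTop (𝓝 M)) : M = 0 := by
  have hstep : Tendsto (fun t => f (t + 1) - f t - M) atTop (𝓝 (-M)) := by
    simpa using ((hfL.comp (tendsto_atTop_add_const_right _ 1 tendsto_id)).sub hfL).sub_const M
  refine abs_eq_zero.1 (le_antisymm (le_of_forall_pos_le_add fun ε hε => ?_) (abs_nonneg M))
  obtain ⟨T, hT⟩ := eventually_atTop.1
    (hf.and (hf'M.eventually (Metric.closedBall_mem_nhds M hε)))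
  have hclose : ∀ᶠ t in atTop, |f (t + 1) - f t - M| ≤ ε := by
    filter_upwards [eventually_ge_atTop T] with t ht
    simpa using abs_sub_sub_mul_le_of_abs_deriv_sub_le zero_le_one
      (fun s hs => (hT s (ht.trans hs.1)).1) (fun s hs => (hT s (ht.trans hs.1)).2)
  simpa using le_of_tendsto hstep.abs hclose

theorem abs_mul_le_abs_sub_add_of_abs_deriv_deriv_le {f g g' : ℝ → ℝ} {t h B : ℝ} (hh : 0 < h)
    (hf : ∀ s ∈ Icc t (t + h), HasDerivAt f (g s) s)
    (hg : ∀ s ∈ Icc t (t + h), HasDerivAt g (g' s) s) (hB : ∀ s ∈ Icc t (t + h), |g' s| ≤ B) :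
    |g t| * h ≤ |f (t + h) - f t| + B * h * h := by
  have hB0 : 0 ≤ B := (abs_nonneg _).trans (hB t ⟨le_rfl, by linarith⟩)
  have hg_close : ∀ s ∈ Icc t (t + h), |g s - g t| ≤ B * h := by
    intro s hs
    have hIcc : Icc t (t + (s - t)) ⊆ Icc t (t + h) := Icc_subset_Icc le_rfl (by linarith [hs.2])
    have := abs_sub_sub_mul_le_of_abs_deriv_sub_le (c := 0) (sub_nonneg.2 hs.1)
      (fun r hr => hg r (hIcc hr)) (fun r hr => by simpa using hB r (hIcc hr))
    rw [add_sub_cancel, zero_mul, sub_zero] at this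
    exact this.trans (mul_le_mul_of_nonneg_left (by linarith [hs.2]) hB0)
  have := abs_sub_sub_mul_le_of_abs_deriv_sub_le hh.le hf hg_close
  have htri := abs_sub (f (t + h) - f t) (f (t + h) - f t - g t * h)
  rw [sub_sub_cancel, abs_mul, abs_of_pos hh] at htri
  linarith

theorem tendsto_zero_of_tendsto_of_abs_deriv_deriv_le {f g g' : ℝ → ℝ} {L B : ℝ}
    (hf : ∀ᶠ t in atTop, HasDerivAt f (g t) t) (hg : ∀ᶠ t in atTop, HasDerivAt g (g' t) t)
    (hB : ∀ᶠ t in atTop, |g' t| ≤ B) (hfL : Tendsto f atTop (𝓝 L)) :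
    Tendsto g atTop (𝓝 0) := by
  obtain ⟨T, hT⟩ := eventually_atTop.1 (hf.and (hg.and hB))
  have hB0 : 0 ≤ B := (abs_nonneg _).trans (hT T le_rfl).2.2
  have htaylor : ∀ h > 0, ∀ t ≥ T, |g t| * h ≤ |f (t + h) - f t| + B * h * h :=
    fun h hh t ht => abs_mul_le_abs_sub_add_of_abs_deriv_deriv_le hh
      (fun s hs => (hT s (ht.trans hs.1)).1) (fun s hs => (hT s (ht.trans hs.1)).2.1)
      (fun s hs => (hT s (ht.trans hs.1)).2.2)
  rw [Metric.tendsto_nhds]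
  intro ε hε
  set h := ε / (2 * (B + 1)) with hh_def
  have hh : 0 < h := by positivity
  have hBh : B * h < ε / 2 := by
    rw [hh_def, mul_div_assoc', div_lt_div_iff₀ (by positivity) two_pos]
    nlinarith
  have hinc : Tendsto (fun t => f (t + h) - f t) atTop (𝓝 0) := by
    simpa using (hfL.comp (tendsto_atTop_add_const_right _ h tendsto_id)).sub hfL
  filter_upwards [eventually_ge_atTop T,
    hinc.eventually (Metric.ball_mem_nhds 0 (show 0 < ε * h / 2 by positivity))] with t ht hsmall
  rw [Real.dist_eq, sub_zero] at hsmall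
  rw [Real.dist_eq, sub_zero]
  refine lt_of_mul_lt_mul_right ?_ hh.le
  nlinarith [htaylor h hh t ht]

theorem exists_tendsto_of_hasDerivAt_nonneg {f f' : ℝ → ℝ} {b : ℝ}
    (hf : ∀ᶠ t in atTop, HasDerivAt f (f' t) t) (hf' : ∀ᶠ t in atTop, 0 ≤ f' t)
    (hb : ∀ᶠ t in atTop, f t ≤ b) : ∃ L, Tendsto f atTop (𝓝 L) := by
  obtain ⟨T, hT⟩ := eventually_atTop.1 (hf.and (hf'.and hb))
  have hmono : MonotoneOn f (Ici T) := monotoneOn_of_hasDerivWithinAt_nonneg (convex_Ici T)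
    (fun t ht => (hT t ht).1.continuousAt.continuousWithinAt)
    (fun t ht => (hT t (interior_subset ht)).1.hasDerivWithinAt)
    (fun t ht => (hT t (interior_subset ht)).2.1)
  have hmono' : Monotone (fun t => f (max t T)) := fun s t hst =>
    hmono (le_max_right s T) (le_max_right t T) (max_le_max hst le_rfl)
  refine ⟨_, (tendsto_atTop_ciSup hmono' ⟨b, ?_⟩).congr' ?_⟩
  · rintro _ ⟨t, rfl⟩
    exact (hT _ (le_max_right t T)).2.2
  · filter_upwards [eventually_ge_atTop T] with t ht
    rw [max_eq_left ht]

theorem exists_tendsto_of_hasDerivAt_of_eventually_sign {f f' : ℝ → ℝ} {a b : ℝ}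
    (hf : ∀ᶠ t in atTop, HasDerivAt f (f' t) t)
    (hf' : (∀ᶠ t in atTop, 0 ≤ f' t) ∨ ∀ᶠ t in atTop, f' t ≤ 0)
    (hab : ∀ᶠ t in atTop, f t ∈ Icc a b) : ∃ L, Tendsto f atTop (𝓝 L) := by
  rcases hf' with hf' | hf'
  · exact exists_tendsto_of_hasDerivAt_nonneg hf hf' (hab.mono fun t ht => ht.2)
  · obtain ⟨L, hL⟩ := exists_tendsto_of_hasDerivAt_nonneg (f := -f) (hf.mono fun t ht => ht.neg)
      (hf'.mono fun t ht => neg_nonneg.2 ht) (hab.mono fun t ht => neg_le_neg ht.1)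
    exact ⟨-L, by simpa using hL.neg⟩

theorem HasDerivAt.eventually_pos_nhdsGT {f : ℝ → ℝ} {f' x : ℝ} (hf : HasDerivAt f f' x)
    (hx : f x = 0) (hf' : 0 < f') : ∀ᶠ y in 𝓝[>] x, 0 < f y := by
  have hslope := (hasDerivAt_iff_tendsto_slope.1 hf).mono_left (nhdsGT_le_nhdsNE x)
  filter_upwards [hslope.eventually (eventually_gt_nhds hf'), self_mem_nhdsWithin]
    with y hy (hxy : x < y)
  rw [slope_def_field, hx, sub_zero] at hy
  exact (div_pos_iff_of_pos_right (sub_pos.2 hxy)).1 hy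

theorem nonneg_of_hasDerivAt_sub_mul {P Q : ℝ → ℝ} {k a b : ℝ}
    (hP : ∀ t ∈ Icc a b, HasDerivAt P (Q t - k * P t) t) (hQ : ∀ t ∈ Ico a b, 0 ≤ Q t)
    (ha : 0 ≤ P a) : ∀ t ∈ Icc a b, 0 ≤ P t := by
  intro t ht
  have hneg := le_gronwallBound_of_liminf_deriv_right_le (f := fun s => -P s) (δ := 0) (K := -k)
    (ε := 0) (fun s hs => (hP s hs).continuousAt.neg.continuousWithinAt)
    (fun s hs _ hr =>
      ((hP s (Ico_subset_Icc_self hs)).neg.hasDerivWithinAt).liminf_right_slope_le hr)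
    (by linarith) (fun s hs => by nlinarith [hQ s hs]) t ht
  rw [gronwallBound_ε0_δ0] at hneg
  linarith

theorem nonneg_and_nonneg_of_hasDerivAt {P Q Q' : ℝ → ℝ} {k t₀ : ℝ}
    (hP : ∀ t, HasDerivAt P (Q t - k * P t) t) (hQ : ∀ t, HasDerivAt Q (Q' t) t)
    (hQ' : ∀ t, 0 ≤ P t → Q t = 0 → 0 < Q' t) (hP₀ : 0 ≤ P t₀) (hQ₀ : 0 ≤ Q t₀) :
    ∀ t ≥ t₀, 0 ≤ P t ∧ 0 ≤ Q t := by
  have hPc : Continuous P := continuous_iff_continuousAt.2 fun t => (hP t).continuousAt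
  have hQc : Continuous Q := continuous_iff_continuousAt.2 fun t => (hQ t).continuousAt
  set S := {t | 0 ≤ P t ∧ 0 ≤ Q t}
  have hS : IsClosed S :=
    (isClosed_le continuous_const hPc).inter (isClosed_le continuous_const hQc)
  intro t ht
  refine (hS.inter isClosed_Icc).Icc_subset_of_forall_mem_nhdsWithin ⟨hP₀, hQ₀⟩ ?_ ⟨ht, le_rfl⟩
  -- Continuous induction: just right of a point of `S`, `Q > 0` (by continuity, or since
  -- `Q' > 0` where `Q = 0`), which keeps `P ≥ 0` there.
  rintro x ⟨⟨hPx, hQx⟩, -⟩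
  have hQpos : ∀ᶠ y in 𝓝[>] x, 0 < Q y := by
    rcases hQx.eq_or_lt with hQx | hQx
    · exact (hQ x).eventually_pos_nhdsGT hQx.symm (hQ' x hPx hQx.symm)
    · exact eventually_nhdsWithin_of_eventually_nhds
        (hQc.continuousAt.eventually (eventually_gt_nhds hQx))
  obtain ⟨u, hxu, hu⟩ := mem_nhdsGT_iff_exists_Ioo_subset.1 hQpos
  refine mem_of_superset (Ioo_mem_nhdsGT hxu) fun y hy => ⟨?_, (hu hy).le⟩
  refine nonneg_of_hasDerivAt_sub_mul (fun s _ => hP s) (fun s hs => ?_) hPx y ⟨hy.1.le, le_rfl⟩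
  rcases hs.1.eq_or_lt with rfl | hxs
  · exact hQx
  · exact (hu ⟨hxs, hs.2.trans hy.2⟩).le

theorem eventually_nonneg_or_eventually_nonpos_of_hasDerivAt {P Q Q' : ℝ → ℝ} {k : ℝ}
    (hP : ∀ t, HasDerivAt P (Q t - k * P t) t) (hQ : ∀ t, HasDerivAt Q (Q' t) t)
    (hQ' : ∀ t, 0 ≤ P t → Q t = 0 → 0 < Q' t) :
    (∀ᶠ t in atTop, 0 ≤ P t) ∨ ∀ᶠ t in atTop, P t ≤ 0 := by
  by_cases hquad : ∃ t₀, 0 ≤ P t₀ ∧ 0 ≤ Q t₀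
  · obtain ⟨t₀, hP₀, hQ₀⟩ := hquad
    exact Or.inl (eventually_atTop.2
      ⟨t₀, fun t ht => (nonneg_and_nonneg_of_hasDerivAt hP hQ hQ' hP₀ hQ₀ t ht).1⟩)
  push Not at hquad
  by_cases hzero : ∃ t₀, P t₀ ≤ 0
  · obtain ⟨t₀, hP₀⟩ := hzero
    -- `P` can cross `0` only downwards, since `P' = Q < 0` wherever `P = 0`.
    refine Or.inr (eventually_atTop.2 ⟨t₀, fun t ht => ?_⟩)
    refine image_le_of_deriv_right_lt_deriv_boundary' (B := fun _ => 0) (B' := fun _ => 0)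
      (fun s _ => (hP s).continuousAt.continuousWithinAt) (fun s _ => (hP s).hasDerivWithinAt)
      hP₀ continuousOn_const (fun s _ => hasDerivWithinAt_const _ _ _) (fun s _ hs => ?_)
      ⟨ht, le_rfl⟩
    simpa [hs] using hquad s hs.ge
  · push Not at hzero
    exact Or.inl (Eventually.of_forall fun t => (hzero t).le)

theorem exists_tendsto_of_hasDerivAt_system {W H Q Q' : ℝ → ℝ} {k a b B : ℝ}
    (hW : ∀ t, HasDerivAt W (H t - k * W t) t) (hH : ∀ t, HasDerivAt H (Q t) t)
    (hQ : ∀ t, HasDerivAt Q (Q' t) t) (hQ' : ∀ t, k * W t ≤ H t → Q t = 0 → 0 < Q' t)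
    (hWab : ∀ᶠ t in atTop, W t ∈ Icc a b)
    (hB : ∀ᶠ t in atTop, |Q t - k * (H t - k * W t)| ≤ B) :
    ∃ w, Tendsto W atTop (𝓝 w) ∧ Tendsto H atTop (𝓝 (k * w)) := by
  have hP : ∀ t, HasDerivAt (fun s => H s - k * W s) (Q t - k * (H t - k * W t)) t :=
    fun t => (hH t).sub ((hW t).const_mul k)
  have hsign := eventually_nonneg_or_eventually_nonpos_of_hasDerivAt hP hQ
    (fun t ht => hQ' t (sub_nonneg.1 ht))
  obtain ⟨w, hw⟩ := exists_tendsto_of_hasDerivAt_of_eventually_sign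
    (Eventually.of_forall hW) hsign hWab
  have hP0 := tendsto_zero_of_tendsto_of_abs_deriv_deriv_le (Eventually.of_forall hW)
    (Eventually.of_forall hP) hB hw
  refine ⟨w, hw, ?_⟩
  simpa using hP0.add (hw.const_mul k)

theorem ConcaveOn.deriv2_nonpos_of_hasDerivAt {f f' : ℝ → ℝ} {S : Set ℝ} {x f'' : ℝ}
    (hfc : ConcaveOn ℝ S f) (hS : IsOpen S) (hf : ∀ y ∈ S, HasDerivAt f (f' y) y)
    (hf' : HasDerivAt f' f'' x) (hx : x ∈ S) : f'' ≤ 0 := by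
  have hslope := (hasDerivAt_iff_tendsto_slope.1 hf').mono_left (nhdsGT_le_nhdsNE x)
  refine le_of_tendsto hslope ?_
  filter_upwards [self_mem_nhdsWithin, nhdsWithin_le_nhds (hS.mem_nhds hx)] with y (hxy : x < y) hy
  have hanti : f' y ≤ f' x := (hfc.le_slope_of_hasDerivAt hx hy hxy (hf y hy)).trans
    (hfc.slope_le_of_hasDerivAt hx hy hxy (hf x hx))
  rw [slope_def_field]
  exact div_nonpos_of_nonpos_of_nonneg (by linarith) (by linarith)

theorem hasDerivAt_comp_exp {f : ℝ → ℝ} {d t : ℝ} (hf : HasDerivAt f (d / exp t) (exp t)) :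
    HasDerivAt (f ∘ exp) d t := by
  simpa [div_mul_cancel₀ _ (exp_pos t).ne'] using hf.comp t (hasDerivAt_exp t)

theorem rpow_div_eq_div_rpow_inv {η γ : ℝ} (hη : 0 < η) (hγ : γ ≠ 0) :
    η ^ ((γ - 1) / γ) = η / η ^ γ⁻¹ := by
  rw [sub_div, div_self hγ, rpow_sub hη, rpow_one, one_div]

theorem le_rpow_of_mul_le_mul_rpow {a b η γ : ℝ} (ha : 0 < a) (hη : 0 < η) (hγ : 0 < γ)
    (h : a * η ≤ b * η ^ ((γ - 1) / γ)) : η ≤ (b / a) ^ γ := by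
  rw [rpow_div_eq_div_rpow_inv hη hγ.ne', mul_div_assoc', le_div_iff₀ (rpow_pos_of_pos hη _),
    mul_right_comm, mul_le_mul_iff_left₀ hη, ← le_div_iff₀' ha] at h
  exact (rpow_inv_le_iff_of_pos hη.le (h.trans' (rpow_pos_of_pos hη _).le) hγ).1 h

theorem eq_rpow_of_mul_eq_mul_rpow {a b η γ : ℝ} (ha : 0 < a) (hη : 0 < η) (hγ : γ ≠ 0)
    (h : a * η = b * η ^ ((γ - 1) / γ)) : η = (b / a) ^ γ := by
  rw [rpow_div_eq_div_rpow_inv hη hγ, mul_div_assoc', eq_div_iff (rpow_pos_of_pos hη _).ne',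
    mul_right_comm, mul_left_inj' hη.ne'] at h
  have hb : 0 ≤ b / a := by rw [← h, mul_div_cancel_left₀ _ ha.ne']; positivity
  rw [← rpow_inv_eq hη.le hb hγ, ← h, mul_div_cancel_left₀ _ ha.ne']

def SolvesHJB (α γ μ σ β : ℝ) (v v' v'' : ℝ → ℝ) : Prop :=
  ∀ x > (0 : ℝ), β * v x = (1 / 2) * σ ^ 2 * x ^ 2 * v'' x + (x ^ α - μ * x) * v' x
    + (γ / (1 - γ)) * (v' x) ^ ((γ - 1) / γ)

noncomputable def scaledValue (γ : ℝ) (v : ℝ → ℝ) (x : ℝ) : ℝ := x ^ (γ - 1) * v x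

noncomputable def scaledMarginal (γ : ℝ) (v' : ℝ → ℝ) (x : ℝ) : ℝ := x ^ γ * v' x

/-- `x ↦ marginalDrift α γ μ σ β x (w x) (η x)` is `x η'(x)` for `w = x ^ (γ - 1) v` and
`η = x ^ γ v'`, after `v''` is eliminated with the HJB equation. -/
noncomputable def marginalDrift (α γ μ σ β x w η : ℝ) : ℝ :=
  γ * η + 2 / σ ^ 2 * (β * w + (μ - x ^ (α - 1)) * η - γ / (1 - γ) * η ^ ((γ - 1) / γ))

section Scaling

variable {α γ μ σ β x : ℝ} {v v' v'' : ℝ → ℝ}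

theorem eq_rpow_mul_scaledValue (hx : 0 < x) : v x = x ^ (1 - γ) * scaledValue γ v x := by
  rw [scaledValue, ← mul_assoc, ← rpow_add hx]
  simp

theorem mul_eq_rpow_mul_scaledMarginal (hx : 0 < x) :
    x * v' x = x ^ (1 - γ) * scaledMarginal γ v' x := by
  rw [scaledMarginal, ← mul_assoc, ← rpow_add hx]
  simp

theorem scaledMarginal_rpow (hx : 0 < x) (hγ : γ ≠ 0) (hv' : 0 < v' x) :
    scaledMarginal γ v' x ^ ((γ - 1) / γ) = x ^ (γ - 1) * v' x ^ ((γ - 1) / γ) := by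
  rw [scaledMarginal, mul_rpow (rpow_nonneg hx.le _) hv'.le, ← rpow_mul hx.le,
    mul_div_cancel₀ _ hγ]

theorem scaledMarginal_pos (hx : 0 < x) (hv' : 0 < v' x) : 0 < scaledMarginal γ v' x :=
  mul_pos (rpow_pos_of_pos hx _) hv'

theorem SolvesHJB.scaled (hHJB : SolvesHJB α γ μ σ β v v' v'') (hx : 0 < x) (hγ : γ ≠ 0)
    (hv' : 0 < v' x) :
    β * scaledValue γ v x = σ ^ 2 / 2 * (x ^ (γ + 1) * v'' x)
      + (x ^ (α - 1) - μ) * scaledMarginal γ v' x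
      + γ / (1 - γ) * scaledMarginal γ v' x ^ ((γ - 1) / γ) := by
  have h1 : x ^ (γ - 1) * x = x ^ γ := by rw [rpow_sub_one hx.ne', div_mul_cancel₀ _ hx.ne']
  have h2 : x ^ (γ + 1) = x ^ (γ - 1) * x ^ 2 := by
    rw [show γ + 1 = γ - 1 + 2 by ring, rpow_add hx]; norm_num
  have hα : x ^ (α - 1) * x ^ γ = x ^ (γ - 1) * x ^ α := by
    rw [← rpow_add hx, ← rpow_add hx]; ring_nf
  rw [scaledMarginal_rpow hx hγ hv', scaledValue, scaledMarginal, h2]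
  linear_combination x ^ (γ - 1) * hHJB x hx - v' x * hα - μ * v' x * h1

theorem hasDerivAt_scaledValue (hx : 0 < x) (hv : HasDerivAt v (v' x) x) :
    HasDerivAt (scaledValue γ v)
      ((scaledMarginal γ v' x - (1 - γ) * scaledValue γ v x) / x) x := by
  refine ((hasDerivAt_rpow_const (p := γ - 1) (Or.inl hx.ne')).mul hv).congr_deriv ?_
  rw [scaledValue, scaledMarginal, rpow_sub_one hx.ne' (γ - 1), rpow_sub_one hx.ne' γ]
  field_simp
  ring

theorem SolvesHJB.hasDerivAt_scaledMarginal (hHJB : SolvesHJB α γ μ σ β v v' v'') (hx : 0 < x)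
    (hγ : γ ≠ 0) (hσ : σ ≠ 0) (hv' : 0 < v' x) (hv'' : HasDerivAt v' (v'' x) x) :
    HasDerivAt (scaledMarginal γ v')
      (marginalDrift α γ μ σ β x (scaledValue γ v x) (scaledMarginal γ v' x) / x) x := by
  have hscaled := hHJB.scaled hx hγ hv'
  have hv''eq : x ^ (γ + 1) * v'' x = 2 / σ ^ 2 * (β * scaledValue γ v x
      - (x ^ (α - 1) - μ) * scaledMarginal γ v' x
      - γ / (1 - γ) * scaledMarginal γ v' x ^ ((γ - 1) / γ)) := by
    field_simp
    linear_combination (-2) * hscaled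
  refine ((hasDerivAt_rpow_const (p := γ) (Or.inl hx.ne')).mul hv'').congr_deriv ?_
  rw [eq_div_iff hx.ne', marginalDrift, scaledMarginal]
  have h1 : x ^ (γ - 1) * x = x ^ γ := by rw [rpow_sub_one hx.ne', div_mul_cancel₀ _ hx.ne']
  have h2 : x ^ γ * x = x ^ (γ + 1) := (rpow_add_one hx.ne' γ).symm
  unfold scaledMarginal at hv''eq
  linear_combination hv''eq + γ * v' x * h1 + v'' x * h2

theorem hasDerivAt_marginalDrift_exp {W H : ℝ → ℝ} {t w' η' : ℝ} (hγ0 : γ ≠ 0) (hγ1 : γ ≠ 1)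
    (hW : HasDerivAt W w' t) (hH : HasDerivAt H η' t) (hHpos : 0 < H t) :
    HasDerivAt (fun s => marginalDrift α γ μ σ β (exp s) (W s) (H s))
      (γ * η' + 2 / σ ^ 2 * (β * w' + (1 - α) * exp t ^ (α - 1) * H t
        + (μ - exp t ^ (α - 1) + H t ^ ((γ - 1) / γ - 1)) * η')) t := by
  have hexp := (hasDerivAt_exp t).rpow_const (p := α - 1) (Or.inl (exp_pos t).ne')
  have hpow := hH.rpow_const (p := (γ - 1) / γ) (Or.inl hHpos.ne')
  refine ((hH.const_mul γ).add ((((hW.const_mul β).add ((hexp.const_sub μ).mul hH)).sub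
    (hpow.const_mul (γ / (1 - γ)))).const_mul (2 / σ ^ 2))).congr_deriv ?_
  rw [rpow_sub_one (exp_pos t).ne' (α - 1)]
  have : 1 - γ ≠ 0 := sub_ne_zero.2 (Ne.symm hγ1)
  field_simp
  ring

theorem SolvesHJB.eventually_scaledMarginal_le (hHJB : SolvesHJB α γ μ σ β v v' v'')
    (hα : α < 1) (hγ0 : 0 < γ) (hμ : 0 < μ) (hβ : 0 ≤ β)
    (hw : ∀ x > 0, 0 ≤ scaledValue γ v x) (hv' : ∀ x > 0, 0 < v' x)
    (hv'' : ∀ x > 0, v'' x ≤ 0) :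
    ∀ᶠ x in atTop, scaledMarginal γ v' x ≤ (2 * γ / ((1 - γ) * μ)) ^ γ := by
  have hsmall : ∀ᶠ x : ℝ in atTop, x ^ (α - 1) ≤ μ / 2 := by
    have := tendsto_rpow_neg_atTop (y := 1 - α) (by linarith)
    rw [neg_sub] at this
    exact this.eventually (eventually_le_nhds (by positivity))
  filter_upwards [hsmall, eventually_gt_atTop 0] with x hxα hx
  have hη := scaledMarginal_pos (γ := γ) hx (hv' x hx)
  have hscaled := hHJB.scaled hx hγ0.ne' (hv' x hx)
  have hcurv : σ ^ 2 / 2 * (x ^ (γ + 1) * v'' x) ≤ 0 :=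
    mul_nonpos_of_nonneg_of_nonpos (by positivity)
      (mul_nonpos_of_nonneg_of_nonpos (rpow_pos_of_pos hx _).le (hv'' x hx))
  convert le_rpow_of_mul_le_mul_rpow (a := μ / 2) (b := γ / (1 - γ)) (by positivity) hη hγ0
    (by nlinarith [mul_nonneg hβ (hw x hx), mul_nonneg (sub_nonneg.2 hxα) hη.le]) using 2
  field_simp

theorem eventually_scaledValue_le {M : ℝ} (hγ1 : γ < 1) (hv : ∀ x > 0, HasDerivAt v (v' x) x)
    (hM : ∀ᶠ x in atTop, scaledMarginal γ v' x ≤ M) :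
    ∃ Mw, ∀ᶠ x in atTop, scaledValue γ v x ≤ Mw := by
  obtain ⟨X, hX⟩ := eventually_atTop.1 (hM.and (eventually_ge_atTop 1))
  have hX1 := (hX X le_rfl).2
  set A := v X - M / (1 - γ) * X ^ (1 - γ)
  refine ⟨|A| + M / (1 - γ), eventually_atTop.2 ⟨X, fun x hx => ?_⟩⟩
  have hx0 : 0 < x := by linarith
  -- Integrate `v' ≤ M x ^ (-γ)` from `X` to `x`.
  have hcomp : v x ≤ A + M / (1 - γ) * x ^ (1 - γ) := by
    refine image_le_of_deriv_right_le_deriv_boundary (f := v)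
      (B := fun y => A + M / (1 - γ) * y ^ (1 - γ))
      (fun y hy => (hv y (by linarith [hy.1])).continuousAt.continuousWithinAt)
      (fun y hy => (hv y (by linarith [hy.1])).hasDerivWithinAt) (by simp [A]) ?_
      (fun y hy => (((hasDerivAt_rpow_const (p := 1 - γ) (Or.inl (by linarith [hy.1]))).const_mul
        _).const_add A).hasDerivWithinAt) (fun y hy => ?_) ⟨hx, le_rfl⟩
    · exact fun y hy => (((continuousAt_rpow_const _ _ (Or.inl (by linarith [hy.1]))).const_mul
        _).const_add A).continuousWithinAt
    · have hy0 : 0 < y := by linarith [hy.1]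
      have hyη := mul_le_mul_of_nonneg_left (hX y hy.1).1 (rpow_pos_of_pos hy0 (1 - γ)).le
      rw [← mul_eq_rpow_mul_scaledMarginal hy0] at hyη
      have : 1 - γ ≠ 0 := by linarith
      have hB' : M / (1 - γ) * ((1 - γ) * y ^ (1 - γ - 1)) = M * y ^ (1 - γ) / y := by
        rw [rpow_sub_one hy0.ne']; field_simp
      rw [hB', le_div_iff₀ hy0]
      linarith
  rw [eq_rpow_mul_scaledValue (v := v) (γ := γ) hx0] at hcomp
  have hpow := one_le_rpow (z := 1 - γ) (hX1.trans hx) (by linarith)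
  refine le_of_mul_le_mul_left ?_ (rpow_pos_of_pos hx0 (1 - γ))
  nlinarith [le_abs_self A, abs_nonneg A]

theorem eventually_le_scaledMarginal {C₁ Mw : ℝ} (hconc : ConcaveOn ℝ (Ioi 0) v)
    (hv : ∀ x > 0, HasDerivAt v (v' x) x) (hγ1 : γ < 1) (hC₁ : 0 < C₁)
    (hlow : ∀ x > 0, C₁ * x ^ (1 - γ) ≤ v x) (hMw : ∀ᶠ x in atTop, scaledValue γ v x ≤ Mw) :
    ∃ δ > 0, ∀ᶠ x in atTop, δ ≤ scaledMarginal γ v' x := by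
  -- With `C₁ m ^ (1 - γ) ≥ Mw + 1`, the chord of `v` over `[x, m x]` rises by at least
  -- `x ^ (1 - γ)`, while concavity bounds it by `(m - 1) x v' x`.
  obtain ⟨m, hm, hm1⟩ := ((((tendsto_rpow_atTop (y := 1 - γ) (by linarith)).const_mul_atTop
    hC₁).eventually_ge_atTop (Mw + 1)).and (eventually_gt_atTop 1)).exists
  refine ⟨1 / (m - 1), by simp [hm1], ?_⟩
  filter_upwards [hMw, eventually_gt_atTop 0] with x hw hx
  have hmx : x < m * x := by nlinarith
  have hslope := hconc.slope_le_of_hasDerivAt hx (show 0 < m * x by linarith) hmx (hv x hx)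
  rw [slope_def_field, div_le_iff₀ (by linarith),
    show v' x * (m * x - x) = (m - 1) * (x * v' x) by ring, mul_eq_rpow_mul_scaledMarginal hx,
    eq_rpow_mul_scaledValue (v := v) (γ := γ) hx] at hslope
  have hvm := hlow (m * x) (by linarith)
  rw [mul_rpow (by linarith) hx.le] at hvm
  have hxγ := rpow_pos_of_pos hx (1 - γ)
  rw [div_le_iff₀ (by linarith)]
  refine le_of_mul_le_mul_left ?_ hxγ
  nlinarith [mul_le_mul_of_nonneg_left hw hxγ.le]

theorem exists_abs_marginalDrift_le (hα : α < 1) (hγ0 : 0 < γ) (hγ1 : γ < 1) (hμ : 0 < μ)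
    (hβ : 0 ≤ β) {Mw M δ : ℝ} (hδ : 0 < δ) :
    ∃ B, ∀ x w η, 1 ≤ x → w ∈ Icc 0 Mw → η ∈ Icc δ M →
      |marginalDrift α γ μ σ β x w η| ≤ B := by
  refine ⟨γ * M + 2 / σ ^ 2 * (β * Mw + (μ + 1) * M + γ / (1 - γ) * δ ^ ((γ - 1) / γ)),
    fun x w η hx hw hη => ?_⟩
  have hy0 : 0 < x ^ (α - 1) := rpow_pos_of_pos (by linarith) _
  have hy1 : x ^ (α - 1) ≤ 1 := rpow_le_one_of_one_le_of_nonpos hx (by linarith)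
  have hp0 : 0 < η ^ ((γ - 1) / γ) := rpow_pos_of_pos (by linarith [hη.1]) _
  have hpδ : η ^ ((γ - 1) / γ) ≤ δ ^ ((γ - 1) / γ) :=
    rpow_le_rpow_of_nonpos hδ hη.1 (div_nonpos_of_nonpos_of_nonneg (by linarith) hγ0.le)
  have hc : 0 < γ / (1 - γ) := div_pos hγ0 (by linarith)
  have hσ : 0 ≤ 2 / σ ^ 2 := by positivity
  have hinner : |β * w + (μ - x ^ (α - 1)) * η - γ / (1 - γ) * η ^ ((γ - 1) / γ)|
      ≤ β * Mw + (μ + 1) * M + γ / (1 - γ) * δ ^ ((γ - 1) / γ) := by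
    rw [abs_le]
    constructor <;> nlinarith [mul_le_mul_of_nonneg_left hw.2 hβ, mul_nonneg hβ hw.1,
      mul_le_mul_of_nonneg_left hpδ hc.le, mul_pos hc hp0, hη.1, hη.2]
  rw [marginalDrift]
  refine (abs_add_le _ _).trans (add_le_add ?_ ?_)
  · rw [abs_of_pos (by nlinarith [hη.1])]
    exact mul_le_mul_of_nonneg_left hη.2 hγ0.le
  · rw [abs_mul, abs_of_nonneg hσ]
    exact mul_le_mul_of_nonneg_left hinner hσ

end Scaling

section Asymptotics

variable {α γ μ σ β C₁ : ℝ} {v v' v'' : ℝ → ℝ}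

theorem SolvesHJB.eventually_mem_Icc (hHJB : SolvesHJB α γ μ σ β v v' v'') (hα : α < 1)
    (hγ0 : 0 < γ) (hγ1 : γ < 1) (hμ : 0 < μ) (hβ : 0 ≤ β)
    (hv : ∀ x > 0, HasDerivAt v (v' x) x) (hv' : ∀ x > 0, HasDerivAt v' (v'' x) x)
    (hconc : ConcaveOn ℝ (Ioi 0) v) (hv'pos : ∀ x > 0, 0 < v' x) (hC₁ : 0 < C₁)
    (hlow : ∀ x > 0, C₁ * x ^ (1 - γ) ≤ v x) :
    ∃ Mw M δ, 0 < δ ∧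
      ∀ᶠ x in atTop, scaledValue γ v x ∈ Icc C₁ Mw ∧ scaledMarginal γ v' x ∈ Icc δ M := by
  have hw : ∀ x > 0, C₁ ≤ scaledValue γ v x := fun x hx =>
    le_of_mul_le_mul_left (by rw [mul_comm, ← eq_rpow_mul_scaledValue hx]; exact hlow x hx)
      (rpow_pos_of_pos hx _)
  have hv'' : ∀ x > 0, v'' x ≤ 0 := fun x hx =>
    hconc.deriv2_nonpos_of_hasDerivAt isOpen_Ioi hv (hv' x hx) hx
  have hM := hHJB.eventually_scaledMarginal_le hα hγ0 hμ hβ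
    (fun x hx => hC₁.le.trans (hw x hx)) hv'pos hv''
  obtain ⟨Mw, hMw⟩ := eventually_scaledValue_le hγ1 hv hM
  obtain ⟨δ, hδ, hδη⟩ := eventually_le_scaledMarginal hconc hv hγ1 hC₁ hlow hMw
  refine ⟨Mw, (2 * γ / ((1 - γ) * μ)) ^ γ, δ, hδ, ?_⟩
  filter_upwards [hMw, hM, hδη, eventually_gt_atTop 0] with x hMwx hMx hδx hx
  exact ⟨⟨hw x hx, hMwx⟩, hδx, hMx⟩

theorem SolvesHJB.hasDerivAt_scaledMarginal_comp_exp (hHJB : SolvesHJB α γ μ σ β v v' v'')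
    (hγ : γ ≠ 0) (hσ : σ ≠ 0) (hv' : ∀ x > 0, HasDerivAt v' (v'' x) x)
    (hv'pos : ∀ x > 0, 0 < v' x) (t : ℝ) :
    HasDerivAt (scaledMarginal γ v' ∘ exp) (marginalDrift α γ μ σ β (exp t)
      (scaledValue γ v (exp t)) (scaledMarginal γ v' (exp t))) t :=
  hasDerivAt_comp_exp (hHJB.hasDerivAt_scaledMarginal (exp_pos t) hγ hσ
    (hv'pos _ (exp_pos t)) (hv' _ (exp_pos t)))

theorem SolvesHJB.exists_tendsto_scaled_comp_exp (hHJB : SolvesHJB α γ μ σ β v v' v'')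
    (hα : α < 1) (hγ0 : 0 < γ) (hγ1 : γ < 1) (hμ : 0 < μ) (hσ : σ ≠ 0) (hβ : 0 ≤ β)
    (hv : ∀ x > 0, HasDerivAt v (v' x) x) (hv' : ∀ x > 0, HasDerivAt v' (v'' x) x)
    (hconc : ConcaveOn ℝ (Ioi 0) v) (hv'pos : ∀ x > 0, 0 < v' x) (hC₁ : 0 < C₁)
    (hlow : ∀ x > 0, C₁ * x ^ (1 - γ) ≤ v x) :
    ∃ w, C₁ ≤ w ∧ Tendsto (scaledValue γ v ∘ exp) atTop (𝓝 w) ∧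
      Tendsto (scaledMarginal γ v' ∘ exp) atTop (𝓝 ((1 - γ) * w)) := by
  obtain ⟨Mw, M, δ, hδ, hbd⟩ :=
    hHJB.eventually_mem_Icc hα hγ0 hγ1 hμ hβ hv hv' hconc hv'pos hC₁ hlow
  set W := scaledValue γ v ∘ exp
  set H := scaledMarginal γ v' ∘ exp
  have hHpos : ∀ t, 0 < H t := fun t => scaledMarginal_pos (exp_pos t) (hv'pos _ (exp_pos t))
  have hW : ∀ t, HasDerivAt W (H t - (1 - γ) * W t) t := fun t =>
    hasDerivAt_comp_exp (hasDerivAt_scaledValue (exp_pos t) (hv _ (exp_pos t)))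
  have hH : ∀ t, HasDerivAt H (marginalDrift α γ μ σ β (exp t) (W t) (H t)) t :=
    hHJB.hasDerivAt_scaledMarginal_comp_exp hγ0.ne' hσ hv' hv'pos
  have hQ := fun t => hasDerivAt_marginalDrift_exp (α := α) (μ := μ) (σ := σ) (β := β)
    hγ0.ne' hγ1.ne (hW t) (hH t) (hHpos t)
  have hbdt : ∀ᶠ t in atTop, W t ∈ Icc C₁ Mw ∧ H t ∈ Icc δ M := tendsto_exp_atTop.eventually hbd
  obtain ⟨BQ, hBQ⟩ := exists_abs_marginalDrift_le (σ := σ) hα hγ0 hγ1 hμ hβ (Mw := Mw) (M := M) hδ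
  have hB : ∀ᶠ t in atTop, |marginalDrift α γ μ σ β (exp t) (W t) (H t)
      - (1 - γ) * (H t - (1 - γ) * W t)| ≤ BQ + (1 - γ) * (M + (1 - γ) * Mw) := by
    filter_upwards [hbdt, eventually_ge_atTop 0] with t ⟨hWt, hHt⟩ ht
    have hQb := hBQ _ _ _ (one_le_exp ht) ⟨hC₁.le.trans hWt.1, hWt.2⟩ hHt
    have hPb : |H t - (1 - γ) * W t| ≤ M + (1 - γ) * Mw := by
      rw [abs_le]; constructor <;> nlinarith [hWt.1, hWt.2, hHt.1, hHt.2]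
    exact (abs_sub _ _).trans
      (add_le_add hQb (by rw [abs_mul, abs_of_pos (by linarith)]; gcongr))
  -- Where `Q = 0`, `Q' = 2 / σ ^ 2 * (β P + (1 - α) x ^ (α - 1) H)`: the production term
  -- makes it positive.
  obtain ⟨w, hWw, hHw⟩ := exists_tendsto_of_hasDerivAt_system hW hH hQ
    (fun t hP hQ0 => by
      rw [hQ0, mul_zero, mul_zero, add_zero, zero_add]
      have : 0 < (1 - α) * exp t ^ (α - 1) * H t :=
        mul_pos (mul_pos (by linarith) (rpow_pos_of_pos (exp_pos t) _)) (hHpos t)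
      have : 0 ≤ β * (H t - (1 - γ) * W t) := mul_nonneg hβ (by linarith)
      positivity)
    (hbdt.mono fun t ht => ht.1) hB
  exact ⟨w, ge_of_tendsto hWw (hbdt.mono fun t ht => ht.1.1), hWw, hHw⟩

theorem SolvesHJB.tendsto_scaledMarginal (hHJB : SolvesHJB α γ μ σ β v v' v'')
    (hα : α < 1) (hγ0 : 0 < γ) (hγ1 : γ < 1) (hμ : 0 < μ) (hσ : σ ≠ 0) (hβ : 0 ≤ β)
    (hv : ∀ x > 0, HasDerivAt v (v' x) x) (hv' : ∀ x > 0, HasDerivAt v' (v'' x) x)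
    (hconc : ConcaveOn ℝ (Ioi 0) v) (hv'pos : ∀ x > 0, 0 < v' x) (hC₁ : 0 < C₁)
    (hlow : ∀ x > 0, C₁ * x ^ (1 - γ) ≤ v x) :
    ∃ η > 0, Tendsto (scaledMarginal γ v') atTop (𝓝 η) ∧
      (β + μ * (1 - γ) + (1 / 2) * σ ^ 2 * γ * (1 - γ)) * η = γ * η ^ ((γ - 1) / γ) := by
  obtain ⟨w, hC₁w, hW, hH⟩ :=
    hHJB.exists_tendsto_scaled_comp_exp hα hγ0 hγ1 hμ hσ hβ hv hv' hconc hv'pos hC₁ hlow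
  have hη : 0 < (1 - γ) * w := mul_pos (by linarith) (hC₁.trans_le hC₁w)
  refine ⟨(1 - γ) * w, hη, ?_, ?_⟩
  · refine (hH.comp tendsto_log_atTop).congr' ?_
    filter_upwards [eventually_gt_atTop 0] with x hx
    simp [exp_log hx]
  have hexp : Tendsto (fun t => exp t ^ (α - 1)) atTop (𝓝 0) := by
    have := (tendsto_rpow_neg_atTop (y := 1 - α) (by linarith)).comp tendsto_exp_atTop
    rwa [neg_sub] at this
  -- `Q = H'` converges along with `H`, so its limit vanishes.
  have hlim := eq_zero_of_tendsto_of_tendsto_deriv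
    (Eventually.of_forall (hHJB.hasDerivAt_scaledMarginal_comp_exp hγ0.ne' hσ hv' hv'pos)) hH
    ((hH.const_mul γ).add ((((hW.const_mul β).add ((hexp.const_sub μ).mul hH)).sub
      ((hH.rpow_const (Or.inl hη.ne')).const_mul (γ / (1 - γ)))).const_mul (2 / σ ^ 2)))
  have : 1 - γ ≠ 0 := by linarith
  field_simp at hlim ⊢
  linear_combination hlim

end Asymptotics

theorem isoelastic_hjb_deriv_asymptotics_general
    (α γ μ σ β : ℝ) (hα1 : α < 1) (hγ0 : 0 < γ) (hγ1 : γ < 1)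
    (hμ : 0 < μ) (hσ : 0 < σ) (hβ : 0 < β)
    (v v' v'' : ℝ → ℝ)
    (hv'deriv : ∀ x > (0 : ℝ), HasDerivAt v (v' x) x)
    (hv''deriv : ∀ x > (0 : ℝ), HasDerivAt v' (v'' x) x)
    (hconc : ConcaveOn ℝ (Ioi 0) v)
    (hv'pos : ∀ x > (0 : ℝ), 0 < v' x)
    (hHJB : ∀ x > (0 : ℝ), β * v x =
      (1 / 2) * σ ^ 2 * x ^ 2 * v'' x + (x ^ α - μ * x) * v' x
        + (γ / (1 - γ)) * (v' x) ^ ((γ - 1) / γ))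
    (C₁ : ℝ) (hC₁ : 0 < C₁)
    (hlow : ∀ x > (0 : ℝ), C₁ * x ^ (1 - γ) ≤ v x) :
    0 < (γ / (β + μ * (1 - γ) + (1 / 2) * σ ^ 2 * γ * (1 - γ))) ^ γ ∧
      Tendsto (fun x => x ^ γ * v' x) atTop
        (𝓝 ((γ / (β + μ * (1 - γ) + (1 / 2) * σ ^ 2 * γ * (1 - γ))) ^ γ)) := by
  obtain ⟨η, hη, hlim, heq⟩ := SolvesHJB.tendsto_scaledMarginal hHJB hα1 hγ0 hγ1 hμ hσ.ne'
    hβ.le hv'deriv hv''deriv hconc hv'pos hC₁ hlow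
  have hK : 0 < β + μ * (1 - γ) + (1 / 2) * σ ^ 2 * γ * (1 - γ) := by
    have := sub_pos.2 hγ1
    positivity
  rw [← eq_rpow_of_mul_eq_mul_rpow hK hη hγ0.ne' heq]
  exact ⟨hη, hlim⟩

/-- Asymptotics at infinity: `x^γ v'(x) → (γ/(β + μ(1−γ) + σ²γ(1−γ)/2))^γ > 0` as `x → ∞`. -/
theorem isoelastic_hjb_deriv_asymptotics
    (α γ μ σ β : ℝ) (hα0 : 0 < α) (hα1 : α < 1) (hγ0 : 0 < γ) (hγ1 : γ < 1)
    (hμ : 0 < μ) (hσ : 0 < σ) (hβ : 0 < β)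
    (v v' v'' : ℝ → ℝ)
    (hv'deriv : ∀ x > (0 : ℝ), HasDerivAt v (v' x) x)
    (hv''deriv : ∀ x > (0 : ℝ), HasDerivAt v' (v'' x) x)
    (hv''cont : ContinuousOn v'' (Ioi 0))
    (hvnonneg : ∀ x > (0 : ℝ), 0 ≤ v x)
    (hconc : ConcaveOn ℝ (Ioi 0) v)
    (hv'pos : ∀ x > (0 : ℝ), 0 < v' x)
    (hHJB : ∀ x > (0 : ℝ), β * v x =
      (1 / 2) * σ ^ 2 * x ^ 2 * v'' x + (x ^ α - μ * x) * v' x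
        + (γ / (1 - γ)) * (v' x) ^ ((γ - 1) / γ))
    (C₁ : ℝ) (hC₁ : 0 < C₁)
    (hlow : ∀ x > (0 : ℝ), C₁ * x ^ (1 - γ) ≤ v x) :
    0 < (γ / (β + μ * (1 - γ) + (1 / 2) * σ ^ 2 * γ * (1 - γ))) ^ γ ∧
      Tendsto (fun x => x ^ γ * v' x) atTop
        (𝓝 ((γ / (β + μ * (1 - γ) + (1 / 2) * σ ^ 2 * γ * (1 - γ))) ^ γ)) :=
  isoelastic_hjb_deriv_asymptotics_general α γ μ σ β hα1 hγ0 hγ1 hμ hσ hβ v v' v'' hv'deriv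
    hv''deriv hconc hv'pos hHJB C₁ hC₁ hlow
end

section
/- Define ζ := ( α / ( β + μ(1−α) + (1/2)σ²α(1−α) ) )^α and v(x) := ζ · ( x^{1−α}/(1−α) + 1/β ) for x > 0. Then v'(x) > 0 and v''(x) < 0 for all x > 0, v is a classical solution on (0,∞) of the HJB equation β v(x) = (1/2)σ²x²v''(x) + (x^α − μx)v'(x) + (α/(1−α))·(v'(x))^{(α−1)/α}, and the associated feedback consumption rate is constant: (v'(x))^{−1/α} / x = ζ^{−1/α} = β/α + (1−α)( μ/α + σ²/2 ) for all x > 0. -/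
open Set Filter Topology

/-! Since `v'(x) = ζ x^(-α)`, every term of the HJB equation is a constant multiple of `1` or of
`x^(1-α)`. The constant terms balance for every `ζ` thanks to the summand `ζ/β` of `v`; the
coefficients of `x^(1-α)` balance exactly when `ζ^(-1/α) = A/α` with
`A = β + μ(1-α) + σ²α(1-α)/2`, which is how `ζ` is chosen. The same identity makes
`(v')^(-1/α) = ζ^(-1/α) x` linear in `x`. -/

theorem hasDerivAt_rpow_one_sub_div {γ x : ℝ} (hγ : γ ≠ 1) (hx : 0 < x) :
    HasDerivAt (fun y : ℝ => y ^ (1 - γ) / (1 - γ)) (x ^ (-γ)) x := by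
  have h := (Real.hasDerivAt_rpow_const (p := 1 - γ) (Or.inl hx.ne')).div_const (1 - γ)
  rwa [sub_sub_cancel_left, mul_div_cancel_left₀ _ (sub_ne_zero.2 hγ.symm)] at h

section IsoelasticValue

variable {γ ζ c x : ℝ} {v : ℝ → ℝ}

theorem deriv_eq_of_eq_isoelastic (hγ : γ ≠ 1)
    (hv : ∀ y, v y = ζ * (y ^ (1 - γ) / (1 - γ) + c)) (hx : 0 < x) :
    deriv v x = ζ * x ^ (-γ) := by
  rw [funext hv]
  exact (((hasDerivAt_rpow_one_sub_div hγ hx).add_const c).const_mul ζ).deriv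

theorem deriv_deriv_eq_of_eq_isoelastic (hγ : γ ≠ 1)
    (hv : ∀ y, v y = ζ * (y ^ (1 - γ) / (1 - γ) + c)) (hx : 0 < x) :
    deriv (deriv v) x = -(γ * ζ * x ^ (-γ - 1)) := by
  have hloc : deriv v =ᶠ[𝓝 x] fun y => ζ * y ^ (-γ) :=
    eventually_of_mem (Ioi_mem_nhds hx) fun y hy => deriv_eq_of_eq_isoelastic hγ hv hy
  rw [hloc.deriv_eq, ((Real.hasDerivAt_rpow_const (p := -γ) (Or.inl hx.ne')).const_mul ζ).deriv]
  ring

end IsoelasticValue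

theorem mul_rpow_rpow {a x : ℝ} (ha : 0 ≤ a) (hx : 0 ≤ x) (p q : ℝ) :
    (a * x ^ p) ^ q = a ^ q * x ^ (p * q) := by
  rw [Real.mul_rpow ha (Real.rpow_nonneg hx p), ← Real.rpow_mul hx]

theorem rpow_rpow_neg_one_div {a α : ℝ} (ha : 0 ≤ a) (hα : α ≠ 0) :
    (a ^ α) ^ (-(1 / α)) = a⁻¹ := by
  rw [← Real.rpow_mul ha, mul_neg, mul_one_div_cancel hα, Real.rpow_neg_one]

theorem isoelastic_hjb_eq {α μ σ β ζ x : ℝ} (hα0 : α ≠ 0) (hα1 : α ≠ 1) (hβ : β ≠ 0)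
    (hζ : 0 < ζ) (hx : 0 < x)
    (hrate : ζ ^ (-(1 / α)) = β / α + (1 - α) * (μ / α + σ ^ 2 / 2)) :
    β * (ζ * (x ^ (1 - α) / (1 - α) + 1 / β)) =
      (1 / 2) * σ ^ 2 * x ^ 2 * -(α * ζ * x ^ (-α - 1)) + (x ^ α - μ * x) * (ζ * x ^ (-α))
        + (α / (1 - α)) * (ζ * x ^ (-α)) ^ ((α - 1) / α) := by
  have hsq : x ^ 2 * x ^ (-α - 1) = x ^ (1 - α) := by
    rw [show 1 - α = 2 + (-α - 1) by ring, Real.rpow_add hx, Real.rpow_two]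
  have hlin : x * x ^ (-α) = x ^ (1 - α) := by
    rw [sub_eq_add_neg, Real.rpow_add hx, Real.rpow_one]
  have hconst : x ^ α * x ^ (-α) = 1 := by
    rw [← Real.rpow_add hx, add_neg_cancel, Real.rpow_zero]
  have hmarg : (ζ * x ^ (-α)) ^ ((α - 1) / α) = ζ * ζ ^ (-(1 / α)) * x ^ (1 - α) := by
    have hexp : (α - 1) / α = 1 + -(1 / α) := by field_simp; ring
    rw [mul_rpow_rpow hζ.le hx.le, hexp, Real.rpow_add hζ, Real.rpow_one]
    congr 2
    field_simp
    ring
  rw [hmarg, hrate]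
  have h1α : 1 - α ≠ 0 := sub_ne_zero.2 hα1.symm
  field_simp
  linear_combination α * σ ^ 2 * (1 - α) * hsq + 2 * μ * (1 - α) * hlin - 2 * (1 - α) * hconst

theorem explicit_hjb_solution_gamma_eq_alpha_general
    (α μ σ β : ℝ) (hα0 : 0 < α) (hα1 : α < 1) (hμ : 0 < μ) (hβ : 0 < β)
    (ζ : ℝ) (hζ : ζ = (α / (β + μ * (1 - α) + (1 / 2) * σ ^ 2 * α * (1 - α))) ^ α)
    (v : ℝ → ℝ) (hv : ∀ x : ℝ, v x = ζ * (x ^ (1 - α) / (1 - α) + 1 / β)) :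
    ∀ x > (0 : ℝ),
      0 < deriv v x ∧
      deriv (deriv v) x < 0 ∧
      β * v x = (1 / 2) * σ ^ 2 * x ^ 2 * deriv (deriv v) x
        + (x ^ α - μ * x) * deriv v x
        + (α / (1 - α)) * (deriv v x) ^ ((α - 1) / α) ∧
      (deriv v x) ^ (-(1 / α)) / x = ζ ^ (-(1 / α)) ∧
      ζ ^ (-(1 / α)) = β / α + (1 - α) * (μ / α + σ ^ 2 / 2) := by
  intro x hx
  have hα : α ≠ 1 := hα1.ne
  have hA : 0 < β + μ * (1 - α) + (1 / 2) * σ ^ 2 * α * (1 - α) := by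
    have h1α : 0 < 1 - α := by linarith
    positivity
  have hζpos : 0 < ζ := hζ ▸ Real.rpow_pos_of_pos (div_pos hα0 hA) α
  have hrate : ζ ^ (-(1 / α)) = β / α + (1 - α) * (μ / α + σ ^ 2 / 2) := by
    rw [hζ, rpow_rpow_neg_one_div (div_pos hα0 hA).le hα0.ne', inv_div]
    field_simp
    ring
  rw [hv x, deriv_eq_of_eq_isoelastic hα hv hx, deriv_deriv_eq_of_eq_isoelastic hα hv hx]
  refine ⟨by positivity, neg_neg_of_pos (by positivity),
    isoelastic_hjb_eq hα0.ne' hα hβ.ne' hζpos hx hrate, ?_, hrate⟩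
  rw [mul_rpow_rpow hζpos.le hx.le, neg_mul_neg, mul_one_div_cancel hα0.ne', Real.rpow_one,
    mul_div_cancel_right₀ _ hx.ne']

/-- Explicit solution in the case `γ = α`: `v(x) = ζ (x^(1−α)/(1−α) + 1/β)` with
`ζ = (α/(β + μ(1−α) + σ²α(1−α)/2))^α` is strictly increasing, strictly concave, solves
the isoelastic HJB equation, and induces the constant feedback consumption rate
`ζ^(−1/α) = β/α + (1−α)(μ/α + σ²/2)`. -/
theorem explicit_hjb_solution_gamma_eq_alpha
    (α μ σ β : ℝ) (hα0 : 0 < α) (hα1 : α < 1) (hμ : 0 < μ) (hσ : 0 < σ) (hβ : 0 < β)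
    (ζ : ℝ) (hζ : ζ = (α / (β + μ * (1 - α) + (1 / 2) * σ ^ 2 * α * (1 - α))) ^ α)
    (v : ℝ → ℝ) (hv : ∀ x : ℝ, v x = ζ * (x ^ (1 - α) / (1 - α) + 1 / β)) :
    ∀ x > (0 : ℝ),
      0 < deriv v x ∧
      deriv (deriv v) x < 0 ∧
      β * v x = (1 / 2) * σ ^ 2 * x ^ 2 * deriv (deriv v) x
        + (x ^ α - μ * x) * deriv v x
        + (α / (1 - α)) * (deriv v x) ^ ((α - 1) / α) ∧
      (deriv v x) ^ (-(1 / α)) / x = ζ ^ (-(1 / α)) ∧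
      ζ ^ (-(1 / α)) = β / α + (1 - α) * (μ / α + σ ^ 2 / 2) :=
  explicit_hjb_solution_gamma_eq_alpha_general α μ σ β hα0 hα1 hμ hβ ζ hζ v hv
end

section
/- Fix L > 0 and define ζ_L := L^{1−α} / ( β + (1−α)( μ + L + ασ²/2 ) ) and v(x) := ζ_L · ( x^{1−α}/(1−α) + 1/β ) for x > 0. Then v is a classical solution on (0,∞) of the linear elliptic equation β v(x) = (1/2)σ²x²v''(x) + (x^α − μx)v'(x) + (L x)^{1−α}/(1−α) − L x v'(x), and v is nonnegative, strictly increasing and concave on (0,∞). -/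
/-!
`v` is an affine image of the isoelastic utility `x ^ (1 - α) / (1 - α)`, whose first two
derivatives `x ^ (-α)` and `-α * x ^ (-α - 1)` are explicit. Substituting them, every term of the
equation is a constant or a multiple of `x ^ (1 - α)`; the constants agree for any `ζ_L`, and
`ζ_L` is exactly the factor that matches the `x ^ (1 - α)` coefficients. Monotonicity and
concavity are the signs of the two derivatives.
-/

open Set

section IsoelasticUtility

variable {c b γ : ℝ}

theorem hasDerivAt_mul_isoelastic_add (hγ : γ ≠ 1) {x : ℝ} (hx : x ≠ 0) :
    HasDerivAt (fun y => c * (y ^ (1 - γ) / (1 - γ) + b)) (c * x ^ (-γ)) x := by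
  refine ((((Real.hasDerivAt_rpow_const (p := 1 - γ) (Or.inl hx)).div_const (1 - γ)).add_const
    b).const_mul c).congr_deriv ?_
  rw [show 1 - γ - 1 = -γ by ring]
  field_simp

theorem deriv_mul_isoelastic_add (hγ : γ ≠ 1) :
    EqOn (deriv fun y => c * (y ^ (1 - γ) / (1 - γ) + b)) (fun y => c * y ^ (-γ)) {0}ᶜ :=
  fun _ hx => (hasDerivAt_mul_isoelastic_add hγ hx).deriv

theorem hasDerivAt_deriv_mul_isoelastic_add (hγ : γ ≠ 1) {x : ℝ} (hx : x ≠ 0) :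
    HasDerivAt (deriv fun y => c * (y ^ (1 - γ) / (1 - γ) + b))
      (-(c * γ) * x ^ (-γ - 1)) x := by
  have hderiv := (Real.hasDerivAt_rpow_const (p := -γ) (Or.inl hx)).const_mul c
  refine (hderiv.congr_of_eventuallyEq ((deriv_mul_isoelastic_add hγ).eventuallyEq_of_mem
    (isOpen_compl_singleton.mem_nhds hx))).congr_deriv ?_
  ring

theorem strictMonoOn_mul_isoelastic_add (hc : 0 < c) (hγ : γ ≠ 1) :
    StrictMonoOn (fun y => c * (y ^ (1 - γ) / (1 - γ) + b)) (Ioi 0) := by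
  refine strictMonoOn_of_deriv_pos (convex_Ioi 0)
    (fun x hx => (hasDerivAt_mul_isoelastic_add hγ (ne_of_gt hx)).continuousAt.continuousWithinAt)
    fun x hx => ?_
  rw [interior_Ioi] at hx
  rw [(hasDerivAt_mul_isoelastic_add hγ (ne_of_gt hx)).deriv]
  exact mul_pos hc (Real.rpow_pos_of_pos hx _)

theorem concaveOn_mul_isoelastic_add (hc : 0 ≤ c) (hγ0 : 0 ≤ γ) (hγ1 : γ ≠ 1) :
    ConcaveOn ℝ (Ioi 0) (fun y => c * (y ^ (1 - γ) / (1 - γ) + b)) := by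
  refine concaveOn_of_deriv2_nonpos' (convex_Ioi 0)
    (fun x hx =>
      (hasDerivAt_mul_isoelastic_add hγ1 (ne_of_gt hx)).differentiableAt.differentiableWithinAt)
    (fun x hx => (hasDerivAt_deriv_mul_isoelastic_add hγ1
      (ne_of_gt hx)).differentiableAt.differentiableWithinAt)
    fun x hx => ?_
  rw [Function.iterate_succ_apply, Function.iterate_one,
    (hasDerivAt_deriv_mul_isoelastic_add hγ1 (ne_of_gt hx)).deriv]
  exact mul_nonpos_of_nonpos_of_nonneg (neg_nonpos.mpr (mul_nonneg hc hγ0))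
    (Real.rpow_nonneg (le_of_lt hx) _)

end IsoelasticUtility

theorem constant_consumption_equation {α μ σ β L ζ x : ℝ} (hα : α ≠ 1) (hβ : β ≠ 0)
    (hL : 0 ≤ L) (hx : 0 < x)
    (hζ : ζ * (β + (1 - α) * (μ + L + α * σ ^ 2 / 2)) = L ^ (1 - α)) :
    β * (ζ * (x ^ (1 - α) / (1 - α) + 1 / β)) =
      1 / 2 * σ ^ 2 * x ^ 2 * (-(ζ * α) * x ^ (-α - 1)) + (x ^ α - μ * x) * (ζ * x ^ (-α))
        + (L * x) ^ (1 - α) / (1 - α) - L * x * (ζ * x ^ (-α)) := by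
  have hpow : x ^ (1 - α) = x * x ^ (-α) := by
    rw [sub_eq_add_neg, Real.rpow_add hx, Real.rpow_one]
  have hpow_sub_one : x ^ (-α - 1) = x ^ (-α) / x := Real.rpow_sub_one hx.ne' _
  have hpow_inv : x ^ α = (x ^ (-α))⁻¹ := by rw [Real.rpow_neg hx.le, inv_inv]
  have hy : x ^ (-α) ≠ 0 := (Real.rpow_pos_of_pos hx _).ne'
  rw [Real.mul_rpow hL hx.le, ← hζ, hpow, hpow_sub_one, hpow_inv]
  field_simp
  ring

theorem explicit_solution_constant_consumption_general
    (α μ σ β L : ℝ) (hα0 : 0 < α) (hα1 : α < 1) (hμ : 0 < μ) (hβ : 0 < β)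
    (hL : 0 < L)
    (ζL : ℝ) (hζL : ζL = L ^ (1 - α) / (β + (1 - α) * (μ + L + α * σ ^ 2 / 2)))
    (v : ℝ → ℝ) (hv : ∀ x : ℝ, v x = ζL * (x ^ (1 - α) / (1 - α) + 1 / β)) :
    (∀ x > (0 : ℝ), β * v x = (1 / 2) * σ ^ 2 * x ^ 2 * deriv (deriv v) x
        + (x ^ α - μ * x) * deriv v x
        + (L * x) ^ (1 - α) / (1 - α) - L * x * deriv v x) ∧
      (∀ x > (0 : ℝ), 0 ≤ v x) ∧
      StrictMonoOn v (Ioi 0) ∧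
      ConcaveOn ℝ (Ioi 0) v := by
  have hα : α ≠ 1 := hα1.ne
  have h1α : 0 < 1 - α := sub_pos.mpr hα1
  have hζL_pos : 0 < ζL := by rw [hζL]; positivity
  have hζL_mul : ζL * (β + (1 - α) * (μ + L + α * σ ^ 2 / 2)) = L ^ (1 - α) := by
    rw [hζL]; field_simp
  obtain rfl : v = fun x => ζL * (x ^ (1 - α) / (1 - α) + 1 / β) := funext hv
  refine ⟨fun x hx => ?_, fun x hx => by positivity, strictMonoOn_mul_isoelastic_add hζL_pos hα,
    concaveOn_mul_isoelastic_add hζL_pos.le hα0.le hα⟩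
  rw [(hasDerivAt_deriv_mul_isoelastic_add hα hx.ne').deriv,
    (hasDerivAt_mul_isoelastic_add hα hx.ne').deriv]
  exact constant_consumption_equation hα hβ.ne' hL.le hx hζL_mul

/-- Explicit solution for the constant consumption rate `L`:
`v(x) = ζ_L (x^(1−α)/(1−α) + 1/β)` with `ζ_L = L^(1−α)/(β + (1−α)(μ + L + ασ²/2))` solves
the associated linear elliptic equation and is nonnegative, strictly increasing and
concave on `(0,∞)`. -/
theorem explicit_solution_constant_consumption
    (α μ σ β L : ℝ) (hα0 : 0 < α) (hα1 : α < 1) (hμ : 0 < μ) (hσ : 0 < σ) (hβ : 0 < β)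
    (hL : 0 < L)
    (ζL : ℝ) (hζL : ζL = L ^ (1 - α) / (β + (1 - α) * (μ + L + α * σ ^ 2 / 2)))
    (v : ℝ → ℝ) (hv : ∀ x : ℝ, v x = ζL * (x ^ (1 - α) / (1 - α) + 1 / β)) :
    (∀ x > (0 : ℝ), β * v x = (1 / 2) * σ ^ 2 * x ^ 2 * deriv (deriv v) x
        + (x ^ α - μ * x) * deriv v x
        + (L * x) ^ (1 - α) / (1 - α) - L * x * deriv v x) ∧
      (∀ x > (0 : ℝ), 0 ≤ v x) ∧
      StrictMonoOn v (Ioi 0) ∧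
      ConcaveOn ℝ (Ioi 0) v :=
  explicit_solution_constant_consumption_general α μ σ β L hα0 hα1 hμ hβ hL ζL hζL v hv
end

section
/- The value function has a strictly positive limit inferior at the origin: liminf_{x↓0} V(x) > 0, where V(x) := sup_{c ∈ 𝒞} E[ ∫₀^∞ e^{−βt} U( c_t · X^{x,c}_t ) dt ] for x > 0. -/
open MeasureTheory Real Set Filter Topology
open scoped ENNReal

/-!
Use the constant consumption rate `c ≡ 1`. Along it `log G_t = (1-α)(μ+1+σ²/2) t + (1-α) σ W_t`
has continuous paths, so for some `K` the event `E` on which `|log G| ≤ K` on `[0,2]` has positive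
probability. On `E`, for `t ∈ [1,2]`, dropping `x^(1-α)` from `X^{x,1}_t` gives
`X^{x,1}_t ≥ G_t^(-η) ((1-α) ∫₀ᵗ G)^η ≥ e^(-ηK) ((1-α) e^(-K))^η =: δ`, independently of `x`.
Hence `V(x) ≥ J(x, 1) ≥ e^(-2|β|) U(δ) P(E) > 0` for every `x > 0`.
-/

theorem ContinuousOn.mapsTo_Icc_of_forall_rat {f : ℝ → ℝ} {a b : ℝ} {C : Set ℝ} (hab : a < b)
    (hf : ContinuousOn f (Icc a b)) (hC : IsClosed C)
    (hq : ∀ q : ℚ, (q : ℝ) ∈ Ioo a b → f q ∈ C) : MapsTo f (Icc a b) C := by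
  have hclosed := hf.preimage_isClosed_of_isClosed isClosed_Icc hC
  have hIoo : Ioo a b ⊆ Icc a b ∩ f ⁻¹' C :=
    (Rat.denseRange_cast.open_subset_closure_inter isOpen_Ioo).trans <|
      closure_minimal (fun _ ⟨hs, q, hq'⟩ => ⟨Ioo_subset_Icc_self hs, hq' ▸ hq q (hq' ▸ hs)⟩)
        hclosed
  intro s hs
  rw [← closure_Ioo hab.ne] at hs
  exact (closure_minimal hIoo hclosed hs).2

theorem exists_measure_pos_ae_forall_abs_le {Ω : Type*} [MeasurableSpace Ω] (P : Measure Ω)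
    [NeZero P] (Y : ℝ → Ω → ℝ) (hY : ∀ t, Measurable (Y t)) {a b : ℝ} (hab : a < b)
    (hpath : ∀ᵐ ω ∂P, ContinuousOn (fun t => Y t ω) (Icc a b)) :
    ∃ (E : Set Ω) (K : ℝ), MeasurableSet E ∧ 0 < P E ∧
      ∀ᵐ ω ∂P, ω ∈ E → ∀ s ∈ Icc a b, |Y s ω| ≤ K := by
  -- Constraining only rational times keeps `A K` measurable; continuity recovers all times a.e.
  set A : ℕ → Set Ω := fun K => ⋂ q : ℚ, ⋂ (_ : (q : ℝ) ∈ Ioo a b), {ω | |Y q ω| ≤ K}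
  have hA : ∀ K, MeasurableSet (A K) := fun K =>
    .iInter fun q => .iInter fun _ => measurableSet_le (hY q).abs measurable_const
  have hcover : ∀ᵐ ω ∂P, ω ∈ ⋃ K, A K := by
    filter_upwards [hpath] with ω hω
    obtain ⟨M, hM⟩ := isCompact_Icc.bddAbove_image hω.abs
    exact mem_iUnion.2 ⟨⌈M⌉₊, mem_iInter₂.2 fun q hq =>
      (hM (mem_image_of_mem _ (Ioo_subset_Icc_self hq))).trans (Nat.le_ceil M)⟩
  obtain ⟨K, hK⟩ : ∃ K, P (A K) ≠ 0 := by
    by_contra! h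
    have hnull : ∀ᵐ ω ∂P, ω ∉ ⋃ K, A K := measure_eq_zero_iff_ae_notMem.1 (measure_iUnion_null h)
    have : ∀ᵐ ω ∂P, False := by
      filter_upwards [hcover, hnull] with ω h₁ h₂ using h₂ h₁
    exact NeZero.ne P (ae_eq_bot.1 (eventually_false_iff_eq_bot.1 this))
  refine ⟨A K, K, hA K, pos_iff_ne_zero.2 hK, ?_⟩
  filter_upwards [hpath] with ω hω hωA s hs
  exact hω.abs.mapsTo_Icc_of_forall_rat hab isClosed_Iic (fun q hq => mem_iInter₂.1 hωA q hq) hs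

theorem rpow_neg_mul_rpow_le_of_abs_le {y : ℝ → ℝ} {K θ η x t : ℝ} (hθ : 0 ≤ θ) (hη : 0 ≤ η)
    (hx : 0 ≤ x) (ht : 1 ≤ t) (hy : ContinuousOn y (Icc 0 t)) (hyK : ∀ s ∈ Icc 0 t, |y s| ≤ K) :
    exp K ^ (-η) * (θ * exp (-K)) ^ η ≤
      exp (y t) ^ (-η) * (x + θ * ∫ s in Ioc 0 t, exp (y s)) ^ η := by
  have hint : exp (-K) ≤ ∫ s in Ioc 0 t, exp (y s) :=
    calc exp (-K) ≤ exp (-K) * volume.real (Ioc 0 t) :=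
          le_mul_of_one_le_right (exp_pos _).le (by simp [zero_le_one.trans ht, ht])
      _ ≤ ∫ s in Ioc 0 t, exp (y s) :=
          setIntegral_ge_of_const_le_real measurableSet_Ioc measure_Ioc_lt_top.ne
            (fun s hs => exp_le_exp.2 (neg_le_of_abs_le (hyK s (Ioc_subset_Icc_self hs))))
            ((continuous_exp.comp_continuousOn hy).integrableOn_Icc.mono_set Ioc_subset_Icc_self)
  have hyt : y t ≤ K := le_of_abs_le (hyK t ⟨by linarith, le_rfl⟩)
  have hθK : 0 ≤ θ * exp (-K) := mul_nonneg hθ (exp_pos _).le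
  refine mul_le_mul (rpow_le_rpow_of_nonpos (exp_pos _) (exp_le_exp.2 hyt) (neg_nonpos.2 hη))
    (rpow_le_rpow hθK ?_ hη) (rpow_nonneg hθK _) (rpow_nonneg (exp_pos _).le _)
  linarith [mul_le_mul_of_nonneg_left hint hθ]

theorem ofReal_mul_le_setLIntegral_Ioi_of_le {U f : ℝ → ℝ} {β δ : ℝ} (hU : MonotoneOn U (Ici 0))
    (hδ : 0 ≤ δ) (hUδ : 0 ≤ U δ) (hf : ∀ t ∈ Icc 1 2, δ ≤ f t) :
    ENNReal.ofReal (exp (-(2 * |β|)) * U δ) ≤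
      ∫⁻ t in Ioi 0, ENNReal.ofReal (exp (-β * t) * U (f t)) :=
  calc ENNReal.ofReal (exp (-(2 * |β|)) * U δ)
        = ∫⁻ _ in Icc (1 : ℝ) 2, ENNReal.ofReal (exp (-(2 * |β|)) * U δ) := by
          norm_num [setLIntegral_const, Real.volume_Icc]
    _ ≤ ∫⁻ t in Icc 1 2, ENNReal.ofReal (exp (-β * t) * U (f t)) := by
          refine setLIntegral_mono' measurableSet_Icc fun t ht => ENNReal.ofReal_le_ofReal ?_
          have hβt : -(2 * |β|) ≤ -β * t := by
            nlinarith [le_abs_self β, abs_nonneg β, ht.1, ht.2]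
          exact mul_le_mul (exp_le_exp.2 hβt) (hU hδ (hδ.trans (hf t ht)) (hf t ht)) hUδ
            (exp_pos _).le
    _ ≤ ∫⁻ t in Ioi 0, ENNReal.ofReal (exp (-β * t) * U (f t)) :=
          lintegral_mono_set fun t ht => one_pos.trans_le ht.1

theorem mul_measure_le_lintegral_of_ae_le {α : Type*} [MeasurableSpace α] {μ : Measure α}
    {s : Set α} {f : α → ℝ≥0∞} {c : ℝ≥0∞} (hs : MeasurableSet s) (hf : ∀ᵐ a ∂μ, a ∈ s → c ≤ f a) :
    c * μ s ≤ ∫⁻ a, f a ∂μ :=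
  calc c * μ s = ∫⁻ _ in s, c ∂μ := (setLIntegral_const s c).symm
    _ ≤ ∫⁻ a in s, f a ∂μ := lintegral_mono_ae ((ae_restrict_iff' hs).2 hf)
    _ ≤ ∫⁻ a, f a ∂μ := setLIntegral_le_lintegral s f

theorem ramsey_value_function_positive_liminf_at_zero_general
    {Ω : Type*} [MeasurableSpace Ω] (P : Measure Ω) [IsProbabilityMeasure P]
    (α μ σ β η : ℝ) (hα1 : α < 1)
    (hη : η = 1 / (1 - α))
    (W : ℝ → Ω → ℝ)
    (hWsm : ∀ t, StronglyMeasurable (W t))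
    (hWpath : ∀ᵐ ω ∂P, ContinuousOn (fun t => W t ω) (Ici 0))
    (U : ℝ → ℝ)
    (hU0 : U 0 = 0)
    (hUmono : StrictMonoOn U (Ici 0))
    (Adm : (ℝ → Ω → ℝ) → Prop)
    (hAdm : ∀ c, Adm c ↔
      (∀ t ω, 0 ≤ c t ω) ∧
      ProgMeasurable (Filtration.natural W hWsm) c ∧
      (∀ᵐ ω ∂P, ∀ t ≥ (0 : ℝ), IntegrableOn (fun s => c s ω) (Ioc 0 t)))
    (G : (ℝ → Ω → ℝ) → ℝ → Ω → ℝ)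
    (hG : ∀ c t ω, G c t ω =
      Real.exp ((∫ s in Ioc (0 : ℝ) t, (1 - α) * (μ + c s ω + σ ^ 2 / 2))
        + (1 - α) * σ * W t ω))
    (X : ℝ → (ℝ → Ω → ℝ) → ℝ → Ω → ℝ)
    (hX : ∀ x c t ω, X x c t ω =
      (G c t ω) ^ (-η) * (x ^ (1 - α) + (1 - α) * ∫ s in Ioc (0 : ℝ) t, G c s ω) ^ η)
    (J : ℝ → (ℝ → Ω → ℝ) → ℝ≥0∞)
    (hJ : ∀ x c, J x c =
      ∫⁻ ω, (∫⁻ t in Ioi (0 : ℝ),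
        ENNReal.ofReal (Real.exp (-β * t) * U (c t ω * X x c t ω))) ∂P)
    (V : ℝ → ℝ≥0∞)
    (hV : ∀ x, V x = ⨆ (c : ℝ → Ω → ℝ) (_ : Adm c), J x c) :
    0 < Filter.liminf V (𝓝[>] 0) := by
  have hθ : 0 < 1 - α := sub_pos.2 hα1
  have hη0 : 0 ≤ η := hη ▸ (one_div_pos.2 hθ).le
  set c : ℝ → Ω → ℝ := fun _ _ => 1
  have hc : Adm c := (hAdm c).2 ⟨fun _ _ => zero_le_one, isStronglyProgressive_const _ 1,
    ae_of_all _ fun _ _ _ => integrableOn_const measure_Ioc_lt_top.ne enorm_ne_top⟩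
  set Y : ℝ → Ω → ℝ := fun s ω => (1 - α) * (μ + 1 + σ ^ 2 / 2) * s + (1 - α) * σ * W s ω
  have hGc : ∀ s ω, 0 ≤ s → G c s ω = exp (Y s ω) := by
    intro s ω hs
    simp only [hG, c, Y, setIntegral_const, Real.volume_real_Ioc_of_le hs, sub_zero, smul_eq_mul]
    ring_nf
  have hXc : ∀ x t ω, 0 ≤ t → X x c t ω =
      exp (Y t ω) ^ (-η) * (x ^ (1 - α) + (1 - α) * ∫ s in Ioc 0 t, exp (Y s ω)) ^ η := by
    intro x t ω ht
    rw [hX, hGc t ω ht, setIntegral_congr_fun measurableSet_Ioc fun s hs => hGc s ω hs.1.le]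
  have hYpath : ∀ᵐ ω ∂P, ContinuousOn (fun s => Y s ω) (Ici 0) :=
    hWpath.mono fun ω hω => by fun_prop
  obtain ⟨E, K, hE, hPE, hEK⟩ := exists_measure_pos_ae_forall_abs_le P Y
    (fun s => ((hWsm s).measurable.const_mul _).const_add _) two_pos
    (hYpath.mono fun ω hω => hω.mono Icc_subset_Ici_self)
  set δ := exp K ^ (-η) * ((1 - α) * exp (-K)) ^ η
  have hδ : 0 < δ := by positivity
  have hUδ : 0 < U δ := hU0 ▸ hUmono self_mem_Ici hδ.le hδ
  set κ := ENNReal.ofReal (exp (-(2 * |β|)) * U δ)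
  have hJc : ∀ x > 0, κ * P E ≤ J x c := by
    intro x hx
    rw [hJ]
    refine mul_measure_le_lintegral_of_ae_le hE ?_
    filter_upwards [hEK, hYpath] with ω hωK hω hωE
    refine ofReal_mul_le_setLIntegral_Ioi_of_le hUmono.monotoneOn hδ.le hUδ.le fun t ht => ?_
    rw [one_mul, hXc x t ω (zero_le_one.trans ht.1)]
    exact rpow_neg_mul_rpow_le_of_abs_le hθ.le hη0 (rpow_nonneg hx.le _) ht.1
      (hω.mono Icc_subset_Ici_self) fun s hs => hωK hωE s ⟨hs.1, hs.2.trans ht.2⟩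
  have hκ : 0 < κ := ENNReal.ofReal_pos.2 (mul_pos (exp_pos _) hUδ)
  refine (ENNReal.mul_pos hκ.ne' hPE.ne').trans_le (le_liminf_of_le (by isBoundedDefault) ?_)
  filter_upwards [self_mem_nhdsWithin] with x hx
  exact (hJc x hx).trans (hV x ▸ le_iSup₂ (f := fun c' _ => J x c') c hc)

/-- The value function of the stochastic Ramsey problem has a strictly positive limit
inferior at the origin: `liminf_{x↓0} V(x) > 0`. -/
theorem ramsey_value_function_positive_liminf_at_zero
    {Ω : Type*} [MeasurableSpace Ω] (P : Measure Ω) [IsProbabilityMeasure P]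
    (α μ σ β η : ℝ) (hα0 : 0 < α) (hα1 : α < 1) (hμ : 0 < μ) (hσ : 0 < σ) (hβ : 0 < β)
    (hη : η = 1 / (1 - α))
    (W : ℝ → Ω → ℝ)
    (hWsm : ∀ t, StronglyMeasurable (W t))
    (hWpath : ∀ᵐ ω ∂P, ContinuousOn (fun t => W t ω) (Ici 0))
    (hW0 : ∀ᵐ ω ∂P, W 0 ω = 0)
    (hWindep : ∀ (n : ℕ) (t : Fin (n + 1) → ℝ), Monotone t → (∀ i, 0 ≤ t i) →
      ProbabilityTheory.iIndepFun
        (fun i : Fin n => fun ω => W (t i.succ) ω - W (t i.castSucc) ω) P)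
    (hWgauss : ∀ s t : ℝ, 0 ≤ s → s ≤ t →
      P.map (fun ω => W t ω - W s ω) =
        ProbabilityTheory.gaussianReal 0 (Real.toNNReal (t - s)))
    (U : ℝ → ℝ)
    (hUcont : ContinuousOn U (Ici 0)) (hU0 : U 0 = 0)
    (hUnonneg : ∀ y ≥ (0 : ℝ), 0 ≤ U y)
    (hUmono : StrictMonoOn U (Ici 0))
    (hUconc : StrictConcaveOn ℝ (Ici 0) U)
    (U' : ℝ → ℝ) (hU'deriv : ∀ y > (0 : ℝ), HasDerivAt U (U' y) y)
    (hU'0 : Tendsto U' (𝓝[>] 0) atTop) (hU'top : Tendsto U' atTop (𝓝 0))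
    (Adm : (ℝ → Ω → ℝ) → Prop)
    (hAdm : ∀ c, Adm c ↔
      (∀ t ω, 0 ≤ c t ω) ∧
      ProgMeasurable (Filtration.natural W hWsm) c ∧
      (∀ᵐ ω ∂P, ∀ t ≥ (0 : ℝ), IntegrableOn (fun s => c s ω) (Ioc 0 t)))
    (G : (ℝ → Ω → ℝ) → ℝ → Ω → ℝ)
    (hG : ∀ c t ω, G c t ω =
      Real.exp ((∫ s in Ioc (0 : ℝ) t, (1 - α) * (μ + c s ω + σ ^ 2 / 2))
        + (1 - α) * σ * W t ω))
    (X : ℝ → (ℝ → Ω → ℝ) → ℝ → Ω → ℝ)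
    (hX : ∀ x c t ω, X x c t ω =
      (G c t ω) ^ (-η) * (x ^ (1 - α) + (1 - α) * ∫ s in Ioc (0 : ℝ) t, G c s ω) ^ η)
    (J : ℝ → (ℝ → Ω → ℝ) → ℝ≥0∞)
    (hJ : ∀ x c, J x c =
      ∫⁻ ω, (∫⁻ t in Ioi (0 : ℝ),
        ENNReal.ofReal (Real.exp (-β * t) * U (c t ω * X x c t ω))) ∂P)
    (V : ℝ → ℝ≥0∞)
    (hV : ∀ x, V x = ⨆ (c : ℝ → Ω → ℝ) (_ : Adm c), J x c) :
    0 < Filter.liminf V (𝓝[>] 0) :=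
  ramsey_value_function_positive_liminf_at_zero_general P α μ σ β η hα1 hη W hWsm hWpath U hU0
    hUmono Adm hAdm G hG X hX J hJ V hV
end
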